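/- Let x = (B₁,B₂,i,j) and x' = (B₁',B₂',i',j') be ADHM data such that B₁ and B₁' have no common eigenvalue, and let T denote the tensor product construction on ADHM data (using the unique solutions of the associated Sylvester equations). Then the tensor product commutes with dualization: T(x^∨, x'^∨) = T(x,x')^∨, where x^∨ = (B₁^∨, B₂^∨, −j^∨, i^∨) and the dual of a datum on (Ṽ, W̃) is taken on (Ṽ^∨, W̃^∨) with the natural identifications (V⊗W' ⊕ W⊗V')^∨ ≅ V^∨⊗W'^∨ ⊕ W^∨⊗V'^∨ and (W⊗W')^∨ ≅ W^∨⊗W'^∨. -/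

import Mathlib

/-!
Transposing the Sylvester equations of `(x, x')` shows that `Yᵀ` and `Xᵀ`, read through
`(V ⊗ W')^∨ ≅ V^∨ ⊗ W'^∨` and `(W ⊗ V')^∨ ≅ W^∨ ⊗ V'^∨`, solve the Sylvester equations of
`(x^∨, x'^∨)`. These have unique solutions because `B₁^∨` and `B₁'^∨` have the eigenvalues of
`B₁` and `B₁'`: the minimal polynomial `p` of `B₁^∨` kills `B₁^∨ ⊗ 1` while `p(1 ⊗ B₁'^∨)` is
invertible, and `A ∘ D = D ∘ B` forces `p(A) ∘ D = D ∘ p(B)`. So `X' = Yᵀ` and `Y' = Xᵀ`, after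
which the four components of `T(x^∨, x'^∨) = T(x, x')^∨` are checked on pure tensors.
-/

open TensorProduct

section tensorADHM

variable {V W V' W' : Type*}
  [AddCommGroup V] [Module ℂ V] [AddCommGroup W] [Module ℂ W]
  [AddCommGroup V'] [Module ℂ V'] [AddCommGroup W'] [Module ℂ W']

/-- first component `B̃₁` of the tensor product ADHM datum. -/
noncomputable def tB1 (B₁ : V →ₗ[ℂ] V) (B₁' : V' →ₗ[ℂ] V') :
    (V ⊗[ℂ] W') × (W ⊗[ℂ] V') →ₗ[ℂ] (V ⊗[ℂ] W') × (W ⊗[ℂ] V') :=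
  (TensorProduct.map B₁ LinearMap.id).prodMap (TensorProduct.map LinearMap.id B₁')

/-- second component `B̃₂` of the tensor product ADHM datum, with off-diagonal blocks `X, Y`. -/
noncomputable def tB2 (B₂ : V →ₗ[ℂ] V) (B₂' : V' →ₗ[ℂ] V')
    (Xs : W ⊗[ℂ] V' →ₗ[ℂ] V ⊗[ℂ] W') (Ys : V ⊗[ℂ] W' →ₗ[ℂ] W ⊗[ℂ] V') :
    (V ⊗[ℂ] W') × (W ⊗[ℂ] V') →ₗ[ℂ] (V ⊗[ℂ] W') × (W ⊗[ℂ] V') :=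
  LinearMap.prod
    ((TensorProduct.map B₂ LinearMap.id) ∘ₗ (LinearMap.fst ℂ _ _) + Xs ∘ₗ (LinearMap.snd ℂ _ _))
    (Ys ∘ₗ (LinearMap.fst ℂ _ _) + (TensorProduct.map LinearMap.id B₂') ∘ₗ (LinearMap.snd ℂ _ _))

/-- framing-in component `ĩ` of the tensor product ADHM datum. -/
noncomputable def tI (i : W →ₗ[ℂ] V) (i' : W' →ₗ[ℂ] V') :
    W ⊗[ℂ] W' →ₗ[ℂ] (V ⊗[ℂ] W') × (W ⊗[ℂ] V') :=
  LinearMap.prod (TensorProduct.map i LinearMap.id) (TensorProduct.map LinearMap.id i')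

/-- framing-out component `j̃` of the tensor product ADHM datum. -/
noncomputable def tJ (j : V →ₗ[ℂ] W) (j' : V' →ₗ[ℂ] W') :
    (V ⊗[ℂ] W') × (W ⊗[ℂ] V') →ₗ[ℂ] W ⊗[ℂ] W' :=
  LinearMap.coprod (TensorProduct.map j LinearMap.id) (TensorProduct.map LinearMap.id j')

end tensorADHM

open Module

section Sylvester

open Polynomial

variable {K M N : Type*} [Field K] [AddCommGroup M] [Module K M] [AddCommGroup N] [Module K N]

theorem Polynomial.aeval_comp_eq_comp_aeval {A : End K N} {B : End K M} {D : M →ₗ[K] N}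
    (h : A ∘ₗ D = D ∘ₗ B) (p : K[X]) : aeval A p ∘ₗ D = D ∘ₗ aeval B p := by
  induction p using Polynomial.induction_on with
  | C a => ext; simp
  | add p q hp hq => rw [map_add, map_add, LinearMap.add_comp, LinearMap.comp_add, hp, hq]
  | monomial n a ih =>
    rw [pow_succ, ← mul_assoc, aeval_mul (x := A), aeval_mul (x := B), aeval_X, aeval_X,
      End.mul_eq_comp, End.mul_eq_comp, LinearMap.comp_assoc, h, ← LinearMap.comp_assoc, ih,
      LinearMap.comp_assoc]

theorem eq_zero_of_comp_eq_comp_of_aeval_eq_zero_left {A : End K N} {B : End K M}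
    {D : M →ₗ[K] N} (h : A ∘ₗ D = D ∘ₗ B) {p : K[X]} (hA : aeval A p = 0)
    (hB : IsUnit (aeval B p)) : D = 0 := by
  have := aeval_comp_eq_comp_aeval h p
  rw [hA, LinearMap.zero_comp] at this
  exact (LinearMap.cancel_right ((End.isUnit_iff _).mp hB).surjective).mp
    (by rw [← this, LinearMap.zero_comp])

theorem eq_zero_of_comp_eq_comp_of_aeval_eq_zero_right {A : End K N} {B : End K M}
    {D : M →ₗ[K] N} (h : A ∘ₗ D = D ∘ₗ B) {p : K[X]} (hB : aeval B p = 0)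
    (hA : IsUnit (aeval A p)) : D = 0 := by
  have := aeval_comp_eq_comp_aeval h p
  rw [hB, LinearMap.comp_zero] at this
  exact (LinearMap.cancel_left ((End.isUnit_iff _).mp hA).injective).mp
    (by rw [this, LinearMap.comp_zero])

theorem Module.End.isUnit_aeval_minpoly [IsAlgClosed K] [FiniteDimensional K M]
    [FiniteDimensional K N] {A : End K M} {B : End K N}
    (h : ∀ c, ¬(A.HasEigenvalue c ∧ B.HasEigenvalue c)) : IsUnit (aeval B (minpoly K A)) := by
  nontriviality End K N
  rw [← spectrum.zero_notMem_iff K, spectrum.map_polynomial_aeval_of_nonempty _ _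
    (spectrum.nonempty_of_isAlgClosed_of_finiteDimensional K B)]
  rintro ⟨c, hcB, hcA⟩
  exact h c ⟨End.hasEigenvalue_iff_isRoot.mpr hcA, End.hasEigenvalue_iff_mem_spectrum.mpr hcB⟩

theorem Module.End.hasEigenvalue_dualMap_iff [FiniteDimensional K M] {f : End K M} {c : K} :
    End.HasEigenvalue f.dualMap c ↔ f.HasEigenvalue c := by
  have : algebraMap K (End K (Dual K M)) c - f.dualMap
      = (algebraMap K (End K M) c - f).dualMap := by
    ext; simp
  rw [End.hasEigenvalue_iff_mem_spectrum, End.hasEigenvalue_iff_mem_spectrum, spectrum.mem_iff,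
    spectrum.mem_iff, this, LinearMap.isUnit_iff_isUnit_det, LinearMap.det_dualMap,
    ← LinearMap.isUnit_iff_isUnit_det]

end Sylvester

section TensorSylvester

open Polynomial

variable {K M N P Q : Type*} [Field K] [AddCommGroup M] [Module K M] [AddCommGroup N] [Module K N]
  [AddCommGroup P] [Module K P] [AddCommGroup Q] [Module K Q]

theorem Polynomial.aeval_rTensor (A : End K M) (p : K[X]) :
    aeval (A.rTensor P) p = (aeval A p).rTensor P :=
  aeval_algHom_apply (End.rTensorAlgHom K M P) A p

theorem Polynomial.aeval_lTensor (A : End K M) (p : K[X]) :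
    aeval (A.lTensor P) p = (aeval A p).lTensor P :=
  aeval_algHom_apply (End.lTensorAlgHom K M P) A p

variable [IsAlgClosed K] [FiniteDimensional K M] [FiniteDimensional K N] {A : End K M}
  {B : End K N}

theorem eq_zero_of_rTensor_comp_eq_comp_lTensor
    (hAB : ∀ c, ¬(A.HasEigenvalue c ∧ B.HasEigenvalue c)) {D : Q ⊗[K] N →ₗ[K] M ⊗[K] P}
    (h : A.rTensor P ∘ₗ D = D ∘ₗ B.lTensor Q) : D = 0 :=
  eq_zero_of_comp_eq_comp_of_aeval_eq_zero_left h
    (by rw [aeval_rTensor, minpoly.aeval, LinearMap.rTensor_zero])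
    (by rw [aeval_lTensor]; exact (End.isUnit_aeval_minpoly hAB).map (End.lTensorAlgHom K N Q))

theorem eq_zero_of_lTensor_comp_eq_comp_rTensor
    (hAB : ∀ c, ¬(A.HasEigenvalue c ∧ B.HasEigenvalue c)) {D : M ⊗[K] P →ₗ[K] Q ⊗[K] N}
    (h : B.lTensor Q ∘ₗ D = D ∘ₗ A.rTensor P) : D = 0 :=
  eq_zero_of_comp_eq_comp_of_aeval_eq_zero_right h
    (by rw [aeval_rTensor, minpoly.aeval, LinearMap.rTensor_zero])
    (by rw [aeval_lTensor]; exact (End.isUnit_aeval_minpoly hAB).map (End.lTensorAlgHom K N Q))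

end TensorSylvester

section Duality

variable {R M N M' N' : Type*} [CommRing R] [AddCommGroup M] [Module R M] [AddCommGroup N]
  [Module R N] [AddCommGroup M'] [Module R M'] [AddCommGroup N'] [Module R N']

theorem TensorProduct.dualDistrib_comp_map_dualMap (f : M →ₗ[R] M') (g : N →ₗ[R] N') :
    dualDistrib R M N ∘ₗ map f.dualMap g.dualMap = (map f g).dualMap ∘ₗ dualDistrib R M' N' := by
  ext; simp

theorem TensorProduct.dualDistribEquiv_apply [Module.Free R M] [Module.Finite R M]
    [Module.Free R N] [Module.Finite R N] (x : Dual R M ⊗[R] Dual R N) :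
    dualDistribEquiv R M N x = dualDistrib R M N x :=
  rfl

theorem LinearMap.dualMap_sylvester {A : End R N} {B : End R M} {Z C : M →ₗ[R] N}
    (h : A ∘ₗ Z - Z ∘ₗ B + C = 0) :
    B.dualMap ∘ₗ Z.dualMap - Z.dualMap ∘ₗ A.dualMap + -C.dualMap = 0 := by
  ext φ x
  have := congr(φ ($h x))
  simp only [LinearMap.add_apply, LinearMap.sub_apply, LinearMap.comp_apply, map_add, map_sub,
    LinearMap.zero_apply, map_zero] at this
  simp only [LinearMap.add_apply, LinearMap.sub_apply, LinearMap.neg_apply, LinearMap.comp_apply,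
    LinearMap.dualMap_apply, LinearMap.zero_apply]
  linear_combination -this

theorem comp_eq_comp_of_sylvester {A : End R M} {B : End R N} {A' : End R M'} {B' : End R N'}
    (e₁ : M' ≃ₗ[R] M) (e₂ : N' ≃ₗ[R] N) (hA : e₁ ∘ₗ A' = A ∘ₗ e₁) (hB : e₂ ∘ₗ B' = B ∘ₗ e₂)
    {C : N →ₗ[R] M} {C' : N' →ₗ[R] M'} (hC : e₁ ∘ₗ C' = C ∘ₗ e₂)
    {Z : N →ₗ[R] M} {Z' : N' →ₗ[R] M'} (hZ : A ∘ₗ Z - Z ∘ₗ B + C = 0)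
    (hZ' : A' ∘ₗ Z' - Z' ∘ₗ B' + C' = 0)
    (huniq : ∀ D : N' →ₗ[R] M', A' ∘ₗ D = D ∘ₗ B' → D = 0) :
    e₁ ∘ₗ Z' = Z ∘ₗ e₂ := by
  have hD : A' ∘ₗ (Z' - e₁.symm.toLinearMap ∘ₗ Z ∘ₗ e₂)
      = (Z' - e₁.symm.toLinearMap ∘ₗ Z ∘ₗ e₂) ∘ₗ B' := by
    ext x
    apply e₁.injective
    have hA := congr($hA (e₁.symm (Z (e₂ x))))
    have hB := congr(e₁ (e₁.symm (Z ($hB x))))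
    have hC := congr($hC x)
    have hZ := congr($hZ (e₂ x))
    have hZ' := congr(e₁ ($hZ' x))
    simp only [LinearMap.comp_apply, LinearMap.add_apply, LinearMap.sub_apply,
      LinearMap.zero_apply, LinearEquiv.coe_coe, map_add, map_sub, map_zero,
      LinearEquiv.apply_symm_apply] at hA hB hC hZ hZ' ⊢
    linear_combination (norm := module) hZ' - hZ - hA + hB - hC
  rw [sub_eq_zero.mp (huniq _ hD)]
  ext; simp

end Duality

theorem stmt14
    (V W V' W' : Type*)
    [AddCommGroup V] [Module ℂ V] [FiniteDimensional ℂ V]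
    [AddCommGroup W] [Module ℂ W] [FiniteDimensional ℂ W]
    [AddCommGroup V'] [Module ℂ V'] [FiniteDimensional ℂ V']
    [AddCommGroup W'] [Module ℂ W'] [FiniteDimensional ℂ W']
    (B₁ B₂ : V →ₗ[ℂ] V) (i : W →ₗ[ℂ] V) (j : V →ₗ[ℂ] W)
    (B₁' B₂' : V' →ₗ[ℂ] V') (i' : W' →ₗ[ℂ] V') (j' : V' →ₗ[ℂ] W')
    (hdisj : ∀ c : ℂ, ¬(Module.End.HasEigenvalue B₁ c ∧ Module.End.HasEigenvalue B₁' c))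
    -- the Sylvester solutions for (x, x'):
    (Xs : W ⊗[ℂ] V' →ₗ[ℂ] V ⊗[ℂ] W') (Ys : V ⊗[ℂ] W' →ₗ[ℂ] W ⊗[ℂ] V')
    (hX : (TensorProduct.map B₁ LinearMap.id) ∘ₗ Xs
        - Xs ∘ₗ (TensorProduct.map LinearMap.id B₁') + TensorProduct.map i j' = 0)
    (hY : (TensorProduct.map LinearMap.id B₁') ∘ₗ Ys
        - Ys ∘ₗ (TensorProduct.map B₁ LinearMap.id) + TensorProduct.map j i' = 0)
    -- the Sylvester solutions for the dual data (x^∨, x'^∨):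
    (Xd : Dual ℂ W ⊗[ℂ] Dual ℂ V' →ₗ[ℂ] Dual ℂ V ⊗[ℂ] Dual ℂ W')
    (Yd : Dual ℂ V ⊗[ℂ] Dual ℂ W' →ₗ[ℂ] Dual ℂ W ⊗[ℂ] Dual ℂ V')
    (hXd : (TensorProduct.map B₁.dualMap LinearMap.id) ∘ₗ Xd
        - Xd ∘ₗ (TensorProduct.map LinearMap.id B₁'.dualMap)
        + TensorProduct.map (-j.dualMap) i'.dualMap = 0)
    (hYd : (TensorProduct.map LinearMap.id B₁'.dualMap) ∘ₗ Yd
        - Yd ∘ₗ (TensorProduct.map B₁.dualMap LinearMap.id)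
        + TensorProduct.map i.dualMap (-j'.dualMap) = 0) :
    -- the natural identifications:
    ∀ (Φ : ((Dual ℂ V ⊗[ℂ] Dual ℂ W') × (Dual ℂ W ⊗[ℂ] Dual ℂ V')) ≃ₗ[ℂ]
        Dual ℂ ((V ⊗[ℂ] W') × (W ⊗[ℂ] V')))
      (Ψ : (Dual ℂ W ⊗[ℂ] Dual ℂ W') ≃ₗ[ℂ] Dual ℂ (W ⊗[ℂ] W')),
      Φ = ((TensorProduct.dualDistribEquiv ℂ V W').prodCongr
            (TensorProduct.dualDistribEquiv ℂ W V')).trans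
            (Module.dualProdDualEquivDual ℂ (V ⊗[ℂ] W') (W ⊗[ℂ] V')) →
      Ψ = TensorProduct.dualDistribEquiv ℂ W W' →
      -- T(x^∨, x'^∨) = T(x,x')^∨ componentwise:
      (Φ.toLinearMap ∘ₗ tB1 B₁.dualMap B₁'.dualMap
          = (tB1 B₁ B₁').dualMap ∘ₗ Φ.toLinearMap) ∧
      (Φ.toLinearMap ∘ₗ tB2 B₂.dualMap B₂'.dualMap Xd Yd
          = (tB2 B₂ B₂' Xs Ys).dualMap ∘ₗ Φ.toLinearMap) ∧
      (Φ.toLinearMap ∘ₗ tI (-j.dualMap) (-j'.dualMap)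
          = (-(tJ j j').dualMap) ∘ₗ Ψ.toLinearMap) ∧
      (Ψ.toLinearMap ∘ₗ tJ i.dualMap i'.dualMap
          = (tI i i').dualMap ∘ₗ Φ.toLinearMap) := by
  intro Φ Ψ rfl rfl
  have hdisj' : ∀ c, ¬(End.HasEigenvalue B₁.dualMap c ∧ End.HasEigenvalue B₁'.dualMap c) := by
    simpa only [End.hasEigenvalue_dualMap_iff] using hdisj
  have natB₁ : dualDistrib ℂ V W' ∘ₗ TensorProduct.map B₁.dualMap LinearMap.id
      = (TensorProduct.map B₁ LinearMap.id).dualMap ∘ₗ dualDistrib ℂ V W' := by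
    simpa using dualDistrib_comp_map_dualMap B₁ (LinearMap.id : W' →ₗ[ℂ] W')
  have natB₁' : dualDistrib ℂ W V' ∘ₗ TensorProduct.map LinearMap.id B₁'.dualMap
      = (TensorProduct.map LinearMap.id B₁').dualMap ∘ₗ dualDistrib ℂ W V' := by
    simpa using dualDistrib_comp_map_dualMap (LinearMap.id : W →ₗ[ℂ] W) B₁'
  have Xd_eq : ∀ x, dualDistrib ℂ V W' (Xd x) = Ys.dualMap (dualDistrib ℂ W V' x) :=
    LinearMap.congr_fun <| comp_eq_comp_of_sylvester (dualDistribEquiv ℂ V W')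
      (dualDistribEquiv ℂ W V') natB₁ natB₁' (by ext; simp) (LinearMap.dualMap_sylvester hY) hXd
      fun _ hD ↦ eq_zero_of_rTensor_comp_eq_comp_lTensor hdisj' hD
  have Yd_eq : ∀ x, dualDistrib ℂ W V' (Yd x) = Xs.dualMap (dualDistrib ℂ V W' x) :=
    LinearMap.congr_fun <| comp_eq_comp_of_sylvester (dualDistribEquiv ℂ W V')
      (dualDistribEquiv ℂ V W') natB₁' natB₁ (by ext; simp) (LinearMap.dualMap_sylvester hX) hYd
      fun _ hD ↦ eq_zero_of_lTensor_comp_eq_comp_rTensor hdisj' hD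
  refine ⟨?_, ?_, ?_, ?_⟩ <;> ext <;>
    simp [tB1, tB2, tI, tJ, -dualDistribEquiv, dualDistribEquiv_apply, dualProdDualEquivDual_apply,
      LinearMap.dualMap_apply, Xd_eq, Yd_eq]
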